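/- arXiv:1511.06710 — 2 statements merged into one kernel-verified Lean document; each statement's English description precedes it below -/
import Mathlib

section
/- For a convex function f : ℝ^n → ℝ and the cone K_f = cl{(x, γ, t) : γ > 0, γ f(x/γ) ≤ t}: a point (x, 1, t) belongs to K_f if and only if f(x) ≤ t. -/
/-! A convex function on a finite-dimensional space is continuous, so the perspective
`(y, γ) ↦ γ f(γ⁻¹ y)` is continuous at `(x, 1)`; hence the inequality `γ f(γ⁻¹ y) ≤ t` defining
the cone survives passage to the closure at points with `γ = 1`. -/

open Filter Topology

lemma ContinuousAt.le_of_mem_closure {X α : Type*} [TopologicalSpace X] [TopologicalSpace α]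
    [Preorder α] [OrderClosedTopology α] {g h : X → α} {s : Set X} {p : X}
    (hg : ContinuousAt g p) (hh : ContinuousAt h p) (hp : p ∈ closure s)
    (hle : ∀ q ∈ s, g q ≤ h q) : g p ≤ h p := by
  have : (𝓝[s] p).NeBot := mem_closure_iff_nhdsWithin_neBot.mp hp
  exact le_of_tendsto_of_tendsto (hg.tendsto.mono_left nhdsWithin_le_nhds)
    (hh.tendsto.mono_left nhdsWithin_le_nhds) (eventually_nhdsWithin_of_forall hle)

section Perspective

variable {E : Type*} [AddCommGroup E] [Module ℝ E] [TopologicalSpace E] [ContinuousSMul ℝ E]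

lemma continuousAt_perspective_one {f : E → ℝ} {x : E} (hf : ContinuousAt f x) :
    ContinuousAt (fun p : E × ℝ => p.2 * f (p.2⁻¹ • p.1)) (x, 1) := by
  have hscale : ContinuousAt (fun p : E × ℝ => p.2⁻¹ • p.1) (x, 1) :=
    (continuousAt_snd.inv₀ one_ne_zero).smul continuousAt_fst
  exact continuousAt_snd.mul (hf.comp_of_eq hscale (by simp))

theorem mem_closure_perspectiveEpigraph_one_iff {f : E → ℝ} {x : E} (hf : ContinuousAt f x)
    (t : ℝ) :
    (x, (1 : ℝ), t) ∈ closure {q : E × ℝ × ℝ | 0 < q.2.1 ∧ q.2.1 * f (q.2.1⁻¹ • q.1) ≤ q.2.2} ↔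
      f x ≤ t := by
  constructor
  · intro hmem
    have hpersp : ContinuousAt (fun q : E × ℝ × ℝ => q.2.1 * f (q.2.1⁻¹ • q.1)) (x, 1, t) :=
      (continuousAt_perspective_one hf).comp (x := (x, 1, t)) (f := fun q => (q.1, q.2.1))
        (continuousAt_fst.prodMk (continuous_fst.comp continuous_snd).continuousAt)
    simpa using hpersp.le_of_mem_closure (continuous_snd.comp continuous_snd).continuousAt hmem
      fun q hq => hq.2
  · intro h
    exact subset_closure ⟨one_pos, by simpa using h⟩

end Perspective

/-- Fixing the perspective variable to 1 in the cone `K_f` recovers the epigraph of `f`: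
`(x, 1, t) ∈ K_f` iff `f x ≤ t`. -/
theorem stmt_13 {n : ℕ} (f : (Fin n → ℝ) → ℝ) (hf : ConvexOn ℝ Set.univ f)
    (x : Fin n → ℝ) (t : ℝ) :
    (x, (1 : ℝ), t) ∈ closure {q : (Fin n → ℝ) × ℝ × ℝ |
        0 < q.2.1 ∧ q.2.1 * f (q.2.1⁻¹ • q.1) ≤ q.2.2} ↔ f x ≤ t :=
  mem_closure_perspectiveEpigraph_one_iff
    ((hf.continuousOn isOpen_univ).continuousAt univ_mem) t
end

section
/- Consider the outer-approximation algorithm for min{cᵀz : A_x x + A_z z = b, L ≤ x ≤ U, x ∈ ℤ^n, z ∈ K}: at each iteration it solves the MILP relaxation MIOA(T) with finitely many cuts T ⊆ K*, and for the resulting integer part x̂ it adds a cut β ∈ K* which either (if CP(x̂) is feasible with strong duality) certifies cᵀz ≥ v_{x̂} for all z feasible in MIOA with integer part x̂, or (if infeasible with a dual ray) excludes all z with A_z z = b − A_x x̂. Then no integer assignment x̂ can be returned as the MILP optimum in two distinct iterations with strictly improving MILP objective below the incumbent, and since {x ∈ ℤ^n : L ≤ x ≤ U} is finite, the algorithm terminates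 in finitely many iterations. -/
/-- Finite termination of the conic outer-approximation algorithm: an infinite run of
the algorithm, in which each iterate satisfies the MILP relaxation with all previously
added cuts, each MILP objective is strictly below the (nonincreasing) incumbent, and each
added cut either certifies the subproblem value (feasible case, strong duality) or
excludes the integer assignment (infeasible case, dual ray), is impossible; in
particular no integer assignment recurs and, the box `{x ∈ ℤⁿ : L ≤ x ≤ U}` being
finite, the algorithm terminates in finitely many iterations. -/
theorem stmt_14 {n k m : ℕ} (K : Set (Fin k → ℝ))
    (hclosed : IsClosed K) (hconv : Convex ℝ K)
    (hcone : ∀ z ∈ K, ∀ t : ℝ, 0 ≤ t → t • z ∈ K)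
    (Ax : Matrix (Fin m) (Fin n) ℝ) (Az : Matrix (Fin m) (Fin k) ℝ)
    (b : Fin m → ℝ) (c : Fin k → ℝ) (L U : Fin n → ℝ)
    (xhat : ℕ → Fin n → ℝ) (zhat : ℕ → Fin k → ℝ)
    (β : ℕ → Fin k → ℝ) (wT zU : ℕ → ℝ)
    -- integrality and bounds of the MILP solutions
    (hint : ∀ i j, (∃ q : ℤ, xhat i j = q) ∧ L j ≤ xhat i j ∧ xhat i j ≤ U j)
    -- feasibility of the MILP solution for the linear constraints
    (hfeas : ∀ i, Ax.mulVec (xhat i) + Az.mulVec (zhat i) = b)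
    -- feasibility for all previously added cuts
    (hcuts : ∀ i j, j < i → 0 ≤ ∑ l, β j l * zhat i l)
    -- MILP objective value
    (hobj : ∀ i, wT i = ∑ l, c l * zhat i l)
    -- the incumbent upper bound is nonincreasing
    (hmono : ∀ i j, i ≤ j → zU j ≤ zU i)
    -- strict improvement: the MILP lower bound is strictly below the incumbent
    (himp : ∀ i, wT i < zU i)
    -- each added cut β i ∈ K* either certifies the subproblem value v_{x̂ i}
    -- (feasible case, with the incumbent updated to at most v), or excludes all z
    -- with A_z z = b - A_x x̂ i (infeasible case)
    (hβdual : ∀ i, ∀ w ∈ K, 0 ≤ ∑ l, β i l * w l)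
    (hcut : ∀ i,
      (∃ v : ℝ, (∀ z : Fin k → ℝ, Az.mulVec z = b - Ax.mulVec (xhat i) →
          0 ≤ ∑ l, β i l * z l → v ≤ ∑ l, c l * z l) ∧ zU (i + 1) ≤ v) ∨
      (∀ z : Fin k → ℝ, Az.mulVec z = b - Ax.mulVec (xhat i) →
          (∑ l, β i l * z l) < 0)) :
    (∀ i i', i < i' → xhat i ≠ xhat i') ∧ False := by
  have hne : ∀ i i', i < i' → xhat i ≠ xhat i' := by
    intro i i' hlt heq
    have hz : Az.mulVec (zhat i') = b - Ax.mulVec (xhat i) := by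
      rw [heq]
      exact eq_sub_of_add_eq' (hfeas i')
    have hc := hcuts i' i hlt
    rcases hcut i with ⟨v, hv, hzU⟩ | hinf
    · have h1 : v ≤ ∑ l, c l * zhat i' l := hv _ hz hc
      have h2 : wT i' < zU i' := himp i'
      have h3 : zU i' ≤ zU (i + 1) := hmono _ _ hlt
      rw [hobj i'] at h2
      linarith
    · exact absurd hc (not_le.mpr (hinf _ hz))
  refine ⟨hne, ?_⟩
  have hinj : Function.Injective xhat := by
    intro a b hab
    rcases lt_trichotomy a b with h | h | h
    · exact absurd hab (hne a b h)
    · exact h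
    · exact absurd hab.symm (hne b a h)
  set S : Set (Fin n → ℝ) :=
    Set.pi Set.univ (fun j => (fun q : ℤ => (q : ℝ)) '' {q : ℤ | L j ≤ (q : ℝ) ∧ (q : ℝ) ≤ U j})
      with hS
  have hSfin : S.Finite := by
    apply Set.Finite.pi
    intro j
    apply Set.Finite.image
    apply (Set.finite_Icc ⌈L j⌉ ⌊U j⌋).subset
    intro q hq
    exact ⟨Int.ceil_le.mpr hq.1, Int.le_floor.mpr hq.2⟩
  have hmem : ∀ i, xhat i ∈ S := by
    intro i
    intro j _
    obtain ⟨⟨q, hq⟩, h1, h2⟩ := hint i j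
    exact ⟨q, ⟨⟨hq ▸ h1, hq ▸ h2⟩, hq.symm⟩⟩
  exact Set.infinite_of_injective_forall_mem hinj hmem hSfin
end
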